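/- arXiv:2208.00035 — 2 statements merged into one kernel-verified Lean document; each statement's English description precedes it below -/
import Mathlib

section
/- Let ω ∈ {0,...,m-1}^ℕ be a sequence such that for each digit i the frequency C_n^{(i)}/n of i among the first n letters converges to a positive limit l_i. For n ∈ ℕ let M_n = inf{k > n : ω_k = ω_n} be the time of the next occurrence of the digit ω_n. Then M_n / n → 1 as n → ∞. -/
open Filter

/-- If every digit `i ∈ {0,…,m-1}` occurs in `ω` with positive limiting frequency `l i`,
and `M n` is the next time after `n` that the digit `ω n` reappears, then `M n / n → 1`. -/
theorem stmt_2 (m : ℕ) (hm : 0 < m) (ω : ℕ → Fin m) (l : Fin m → ℝ)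
    (hl : ∀ i, 0 < l i) (hl1 : ∑ i, l i = 1)
    (hfreq : ∀ i : Fin m,
      Tendsto (fun n => (((Finset.range n).filter (fun k => ω k = i)).card : ℝ) / n)
        atTop (nhds (l i)))
    (M : ℕ → ℕ) (hM : ∀ n, M n = sInf {k | n < k ∧ ω k = ω n}) :
    Tendsto (fun n => (M n : ℝ) / n) atTop (nhds 1) := by
  set c : Fin m → ℕ → ℕ := fun i N => ((Finset.range N).filter (fun k => ω k = i)).card
    with hc
  -- each digit recurs
  have hne : ∀ n : ℕ, {k | n < k ∧ ω k = ω n}.Nonempty := by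
    intro n
    by_contra h
    rw [Set.not_nonempty_iff_eq_empty] at h
    have hb : ∀ N : ℕ, ((c (ω n) N : ℝ)) / N ≤ ((n : ℝ) + 1) / N := by
      intro N
      rcases Nat.eq_zero_or_pos N with h0 | h0
      · simp [h0]
      · have hsub : (Finset.range N).filter (fun k => ω k = ω n) ⊆ Finset.range (n + 1) := by
          intro k hk
          simp only [Finset.mem_filter, Finset.mem_range] at hk ⊢
          by_contra hk'
          have hmem : k ∈ {k | n < k ∧ ω k = ω n} := ⟨by omega, hk.2⟩
          rw [h] at hmem
          exact hmem
        have hcard := Finset.card_le_card hsub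
        rw [Finset.card_range] at hcard
        have hcr : (c (ω n) N : ℝ) ≤ (n : ℝ) + 1 := by exact_mod_cast hcard
        gcongr
    have h0 : Tendsto (fun N : ℕ => ((n : ℝ) + 1) / N) atTop (nhds 0) :=
      tendsto_const_div_atTop_nhds_zero_nat _
    have := le_of_tendsto_of_tendsto' (hfreq (ω n)) h0 hb
    linarith [hl (ω n)]
  have hMn : ∀ n, n < M n ∧ ω (M n) = ω n := by
    intro n
    have := Nat.sInf_mem (hne n)
    rw [← hM n] at this
    exact this
  have hMle : ∀ n k, n < k → ω k = ω n → M n ≤ k := by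
    intro n k h1 h2
    rw [hM n]
    exact Nat.sInf_le ⟨h1, h2⟩
  have key : ∀ ε : ℝ, 0 < ε → ∀ᶠ n : ℕ in atTop, (M n : ℝ) ≤ (1 + ε) * n := by
    intro ε hε
    set δ : Fin m → ℝ := fun i => l i * ε / (2 + 2 * ε) with hδdef
    have hδpos : ∀ i, 0 < δ i := by
      intro i
      have := hl i
      rw [hδdef]
      positivity
    have hδlt : ∀ i, δ i < l i := by
      intro i
      rw [hδdef]
      rw [div_lt_iff₀ (by linarith)]
      nlinarith [hl i]
    have hid : ∀ i, l i * ε - δ i * (2 + ε) = ε * δ i := by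
      intro i
      rw [hδdef]
      field_simp
      ring
    have hcl : ∀ᶠ N : ℕ in atTop, ∀ i, |((c i N : ℝ)) / N - l i| < δ i := by
      rw [eventually_all]
      intro i
      have h := Metric.tendsto_nhds.mp (hfreq i) (δ i) (hδpos i)
      filter_upwards [h] with N hN
      rwa [Real.dist_eq] at hN
    obtain ⟨N0, hN0⟩ := eventually_atTop.1 hcl
    have hbig : ∀ᶠ n : ℕ in atTop, ∀ i, l i + δ i < (n : ℝ) * (ε * δ i) := by
      rw [eventually_all]
      intro i
      have hpos : 0 < ε * δ i := mul_pos hε (hδpos i)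
      have ht : Tendsto (fun n : ℕ => (n : ℝ) * (ε * δ i)) atTop atTop :=
        Tendsto.atTop_mul_const hpos tendsto_natCast_atTop_atTop
      exact ht.eventually_gt_atTop _
    filter_upwards [hbig, eventually_ge_atTop N0] with n hbign hnN0
    by_contra hcon
    push_neg at hcon
    set i := ω n with hi
    set K := ⌊(1 + ε) * (n : ℝ)⌋₊ with hK
    have hnn : (0 : ℝ) ≤ (1 + ε) * n := by positivity
    have hKn : n ≤ K := Nat.le_floor (by nlinarith [Nat.cast_nonneg (α := ℝ) n])
    have hnone : ∀ k, n < k → k ≤ K → ω k ≠ ω n := by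
      intro k hk1 hk2 hk3
      have hle := hMle n k hk1 hk3
      have hkr : (k : ℝ) ≤ (1 + ε) * n := (Nat.le_floor_iff hnn).1 hk2
      have hler : (M n : ℝ) ≤ (k : ℝ) := by exact_mod_cast hle
      linarith
    have hceq : c i (K + 1) = c i (n + 1) := by
      have hset : (Finset.range (K + 1)).filter (fun k => ω k = i)
          = (Finset.range (n + 1)).filter (fun k => ω k = i) := by
        ext k
        simp only [Finset.mem_filter, Finset.mem_range]
        constructor
        · rintro ⟨h1, h2⟩
          refine ⟨?_, h2⟩
          by_contra h3
          exact hnone k (by omega) (by omega) h2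
        · rintro ⟨h1, h2⟩
          exact ⟨by omega, h2⟩
      simp only [hc]
      rw [hset]
    have hb1 := (hN0 (n + 1) (by omega) i)
    have hb2 := (hN0 (K + 1) (by omega) i)
    rw [abs_lt] at hb1 hb2
    have hn1pos : (0 : ℝ) < (n : ℕ) + 1 := by positivity
    have hK1pos : (0 : ℝ) < (K : ℕ) + 1 := by positivity
    have hcast1 : ((n + 1 : ℕ) : ℝ) = (n : ℝ) + 1 := by push_cast; ring
    have hcast2 : ((K + 1 : ℕ) : ℝ) = (K : ℝ) + 1 := by push_cast; ring
    have e1 : (c i (n + 1) : ℝ) < (l i + δ i) * ((n : ℝ) + 1) := by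
      have h' : (c i (n + 1) : ℝ) / ((n : ℝ) + 1) < l i + δ i := by
        have := hb1.2; rw [hcast1] at this; linarith
      rw [div_lt_iff₀ hn1pos] at h'
      linarith
    have e2 : (l i - δ i) * ((K : ℝ) + 1) < (c i (K + 1) : ℝ) := by
      have h' : l i - δ i < (c i (K + 1) : ℝ) / ((K : ℝ) + 1) := by
        have := hb2.1; rw [hcast2] at this; linarith
      rw [lt_div_iff₀ hK1pos] at h'
      linarith
    have hK1 : (1 + ε) * (n : ℝ) < (K : ℝ) + 1 := Nat.lt_floor_add_one _
    have hld : 0 < l i - δ i := by linarith [hδlt i]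
    have e3 : (l i - δ i) * ((1 + ε) * (n : ℝ)) < (l i - δ i) * ((K : ℝ) + 1) :=
      mul_lt_mul_of_pos_left hK1 hld
    have hceqr : (c i (K + 1) : ℝ) = (c i (n + 1) : ℝ) := by exact_mod_cast hceq
    have e4 : (l i - δ i) * ((1 + ε) * (n : ℝ)) < (l i + δ i) * ((n : ℝ) + 1) := by
      rw [hceqr] at e2
      linarith
    have hid' : (n : ℝ) * (l i * ε - δ i * (2 + ε)) = (n : ℝ) * (ε * δ i) := by
      rw [hid i]
    nlinarith [e4, hid', hbign i]
  rw [Metric.tendsto_nhds]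
  intro ε hε
  have hup := key (ε / 2) (by linarith)
  filter_upwards [hup, eventually_ge_atTop 1] with n h1 h2
  have hn0 : (0 : ℝ) < n := by exact_mod_cast h2
  have hlow : (n : ℝ) < M n := by exact_mod_cast (hMn n).1
  rw [Real.dist_eq]
  have hge : 1 ≤ (M n : ℝ) / n := by
    rw [le_div_iff₀ hn0]
    linarith
  have hle2 : (M n : ℝ) / n ≤ 1 + ε / 2 := by
    rw [div_le_iff₀ hn0]
    linarith
  rw [abs_lt]
  constructor <;> linarith
end

section
/- Let X_1, X_2, ... be independent, identically distributed, non-degenerate real random variables with mean 0, and let S_n = X_1 + ... + X_n. Then almost surely S_n > 0 for infinitely many n and S_n < 0 for infinitely many n. -/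
/-!
Write `S n = X 0 + ⋯ + X (n - 1)`. The core claim is that `T = {S k ≤ 0 for all k ≥ 1}` is null
as soon as `P (X 0 < 0) > 0`. Applied to the shifted sequences `X (m + ·)` (which have the same
joint law), it shows that a.s. the walk exceeds each of its values `S m` later on, so `S n > 0`
infinitely often; the negative side is the same statement for `-X`.

Suppose `P T > 0`. Let `A n` be the event that `n` is a strict ascending ladder time
(`S j < S n` for `j < n`) and `D n = {S 1 > 0, …, S n > 0}`. Reversing the first `n` steps
maps `D n` onto `A n`, so `P (D n) = P (A n)`. The events `A n ∩ {S (n + k) ≤ S n for k ≥ 1}`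
are pairwise disjoint and, by independence and stationarity, have probability `P (A n) * P T`,
hence `∑ P (D n) < ∞`. Thus the first time `N ≥ 1` with `S N ≤ 0` is integrable, and Wald's
identity `E (S N) = ∑ E (X n ; D n) = 0` together with `S N ≤ 0` gives `S N = 0` a.s.,
contradicting `S N = X 0 < 0` on `{X 0 < 0}`.
-/

open MeasureTheory ProbabilityTheory Filter Finset Function
open scoped ENNReal

namespace RandomWalk

/- Events about a sequence of steps `x`, whose walk is at `∑ i ∈ range k, x i` at time `k`. -/

def positiveUpTo (n : ℕ) : Set (ℕ → ℝ) :=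
  {x | ∀ k, 0 < k → k ≤ n → 0 < ∑ i ∈ range k, x i}

def strictLadderAt (n : ℕ) : Set (ℕ → ℝ) :=
  {x | ∀ j < n, ∑ i ∈ range j, x i < ∑ i ∈ range n, x i}

def neverPositive : Set (ℕ → ℝ) :=
  {x | ∀ k, 0 < k → ∑ i ∈ range k, x i ≤ 0}

lemma measurableSet_positiveUpTo (n : ℕ) : MeasurableSet (positiveUpTo n) := by
  unfold positiveUpTo; measurability

lemma measurableSet_neverPositive : MeasurableSet neverPositive := by
  unfold neverPositive; measurability

lemma positiveUpTo_zero : positiveUpTo 0 = Set.univ :=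
  Set.eq_univ_of_forall fun _ k hk hk0 => absurd hk (by omega)

lemma mem_positiveUpTo_succ {x : ℕ → ℝ} {n : ℕ} :
    x ∈ positiveUpTo (n + 1) ↔ x ∈ positiveUpTo n ∧ 0 < ∑ i ∈ range (n + 1), x i := by
  refine ⟨fun h => ⟨fun k hk hkn => h k hk (by omega), h _ n.succ_pos le_rfl⟩,
    fun ⟨h, hn⟩ k hk hkn => ?_⟩
  rcases hkn.lt_or_eq with hkn | rfl
  exacts [h k hk (by omega), hn]

lemma antitone_positiveUpTo : Antitone positiveUpTo :=
  antitone_nat_of_succ_le fun _ _ hx => (mem_positiveUpTo_succ.1 hx).1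

lemma exists_mem_positiveUpTo_sum_nonpos {x : ℕ → ℝ} {m : ℕ} (hm : x ∉ positiveUpTo m) :
    ∃ n, x ∈ positiveUpTo n ∧ ∑ i ∈ range (n + 1), x i ≤ 0 := by
  induction m with
  | zero => exact absurd (positiveUpTo_zero ▸ Set.mem_univ x) hm
  | succ m ih =>
    by_cases hxm : x ∈ positiveUpTo m
    · exact ⟨m, hxm, not_lt.1 fun h => hm (mem_positiveUpTo_succ.2 ⟨hxm, h⟩)⟩
    · exact ih hxm

/-- The position of the walk at the first time `N ≥ 1` where it is `≤ 0`: the indicator of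
`positiveUpTo i` is that of `i < N`. -/
noncomputable def sumUntilNonpos (x : ℕ → ℝ) : ℝ :=
  ∑' i, (positiveUpTo i).indicator (· i) x

lemma sumUntilNonpos_nonpos {x : ℕ → ℝ} {m : ℕ} (hm : x ∉ positiveUpTo m) :
    sumUntilNonpos x ≤ 0 := by
  obtain ⟨n, hn, hsum⟩ := exists_mem_positiveUpTo_sum_nonpos hm
  have hmem : ∀ i, x ∈ positiveUpTo i ↔ i ∈ range (n + 1) := fun i => by
    refine ⟨fun hi => mem_range.2 (Nat.lt_succ_of_le (not_lt.1 fun hlt => ?_)), fun hi =>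
      antitone_positiveUpTo (Nat.lt_succ_iff.1 (mem_range.1 hi)) hn⟩
    exact not_lt.2 hsum (mem_positiveUpTo_succ.1 (antitone_positiveUpTo hlt hi)).2
  rw [sumUntilNonpos, tsum_eq_sum fun i hi => Set.indicator_of_notMem (mt (hmem i).1 hi) _]
  rwa [Finset.sum_congr rfl fun i hi => Set.indicator_of_mem ((hmem i).2 hi) _]

lemma sumUntilNonpos_of_neg {x : ℕ → ℝ} (hx : x 0 < 0) : sumUntilNonpos x = x 0 := by
  have hx1 : ∀ i, i ≠ 0 → x ∉ positiveUpTo i := fun i hi h =>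
    hx.not_gt (by simpa using h 1 one_pos (Nat.one_le_iff_ne_zero.2 hi))
  rw [sumUntilNonpos, tsum_eq_single 0 fun i hi => Set.indicator_of_notMem (hx1 i hi) _,
    positiveUpTo_zero, Set.indicator_univ]

def revPrefix (n i : ℕ) : ℕ := if i < n then n - 1 - i else i

lemma revPrefix_injective (n : ℕ) : Injective (revPrefix n) := by
  intro i j h
  simp only [revPrefix] at h
  split_ifs at h <;> omega

lemma sum_range_revPrefix (x : ℕ → ℝ) {n k : ℕ} (hk : k ≤ n) :
    ∑ i ∈ range k, x (revPrefix n i) = ∑ i ∈ range n, x i - ∑ i ∈ range (n - k), x i := by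
  induction k with
  | zero => simp
  | succ k ih =>
    have hnk : n - k = n - (k + 1) + 1 := by omega
    rw [sum_range_succ, ih (by omega), hnk, sum_range_succ, revPrefix, if_pos (by omega),
      show n - 1 - k = n - (k + 1) by omega]
    ring

lemma comp_revPrefix_mem_positiveUpTo_iff {x : ℕ → ℝ} {n : ℕ} :
    (fun i => x (revPrefix n i)) ∈ positiveUpTo n ↔ x ∈ strictLadderAt n := by
  refine ⟨fun h j hj => ?_, fun h k hk hkn => ?_⟩
  · have := h (n - j) (by omega) (by omega)
    rw [sum_range_revPrefix x (by omega), Nat.sub_sub_self hj.le] at this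
    linarith
  · rw [sum_range_revPrefix x hkn]
    linarith [h (n - k) (by omega)]

lemma le_of_mem_strictLadderAt_of_shift_mem_neverPositive {x : ℕ → ℝ} {a b : ℕ}
    (hb : x ∈ strictLadderAt b) (ha : (fun i => x (a + i)) ∈ neverPositive) : b ≤ a := by
  by_contra! hab
  have := ha (b - a) (by omega)
  rw [← sum_range_add_sub_sum_range, Nat.add_sub_cancel' hab.le] at this
  linarith [hb a hab]

lemma infinite_setOf_sum_pos {x : ℕ → ℝ} (hx : ∀ m, (fun i => x (m + i)) ∉ neverPositive) :
    {n | 0 < ∑ i ∈ range n, x i}.Infinite := by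
  intro hfin
  obtain ⟨k, -, hk⟩ : ∃ k, 0 < k ∧ 0 < ∑ i ∈ range k, x i := by
    simpa [neverPositive] using hx 0
  obtain ⟨a, ha, hmax⟩ := Set.exists_max_image _ id hfin ⟨k, hk⟩
  obtain ⟨l, hl, hincr⟩ : ∃ l, 0 < l ∧ 0 < ∑ i ∈ range l, x (a + i) := by
    simpa [neverPositive] using hx a
  have hal : a + l ∈ {n | 0 < ∑ i ∈ range n, x i} := by
    rw [Set.mem_ofPred_eq, sum_range_add]
    exact add_pos ha hincr
  exact (hmax _ hal).not_gt (Nat.lt_add_of_pos_right hl)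

lemma integrable_tsum_of_tsum_lintegral_enorm_ne_top {α ι : Type*} [MeasurableSpace α]
    [Countable ι] {μ : Measure α} {f : ι → α → ℝ} (hf : ∀ i, Measurable (f i))
    (h : ∑' i, ∫⁻ a, ‖f i a‖ₑ ∂μ ≠ ∞) : Integrable (fun a => ∑' i, f i a) μ := by
  refine ⟨(Measurable.tsum hf).aestronglyMeasurable, ?_⟩
  calc ∫⁻ a, ‖∑' i, f i a‖ₑ ∂μ ≤ ∫⁻ a, ∑' i, ‖f i a‖ₑ ∂μ :=
        lintegral_mono fun _ => enorm_tsum_le_tsum_enorm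
    _ = ∑' i, ∫⁻ a, ‖f i a‖ₑ ∂μ := lintegral_tsum fun i => (hf i).enorm.aemeasurable
    _ < ∞ := h.lt_top

section IID

variable {Ω : Type*} {X : ℕ → Ω → ℝ}

abbrev generatedBy (X : ℕ → Ω → ℝ) (s : Set ℕ) : MeasurableSpace Ω :=
  ⨆ i ∈ s, MeasurableSpace.comap (X i) inferInstance

lemma measurable_generatedBy {s : Set ℕ} {i : ℕ} (hi : i ∈ s) :
    Measurable[generatedBy X s] (X i) :=
  Measurable.of_comap_le (le_biSup (fun j => MeasurableSpace.comap (X j) inferInstance) hi)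

lemma measurable_sum_generatedBy {s : Set ℕ} {t : Finset ℕ} {g : ℕ → ℕ}
    (h : ∀ i ∈ t, g i ∈ s) : Measurable[generatedBy X s] fun ω => ∑ i ∈ t, X (g i) ω :=
  Finset.measurable_sum _ fun i hi => measurable_generatedBy (h i hi)

lemma measurableSet_positiveUpTo_generatedBy (n : ℕ) :
    MeasurableSet[generatedBy X (Set.Iio n)] {ω | (X · ω) ∈ positiveUpTo n} := by
  change MeasurableSet[generatedBy X (Set.Iio n)]
    {ω | ∀ k, 0 < k → k ≤ n → 0 < ∑ i ∈ range k, X i ω}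
  simp only [Set.ofPred_forall]
  exact .iInter fun k => .iInter fun _ => .iInter fun hkn =>
    measurableSet_lt measurable_const
      (measurable_sum_generatedBy (g := id) fun _ hi => (mem_range.1 hi).trans_le hkn)

lemma measurableSet_strictLadderAt_generatedBy (n : ℕ) :
    MeasurableSet[generatedBy X (Set.Iio n)] {ω | (X · ω) ∈ strictLadderAt n} := by
  change MeasurableSet[generatedBy X (Set.Iio n)]
    {ω | ∀ j < n, ∑ i ∈ range j, X i ω < ∑ i ∈ range n, X i ω}
  simp only [Set.ofPred_forall]
  exact .iInter fun j => .iInter fun hj =>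
    measurableSet_lt (measurable_sum_generatedBy (g := id) fun _ hi => (mem_range.1 hi).trans hj)
      (measurable_sum_generatedBy (g := id) fun _ hi => mem_range.1 hi)

lemma measurableSet_shift_neverPositive_generatedBy (m : ℕ) :
    MeasurableSet[generatedBy X (Set.Ici m)] {ω | (fun i => X (m + i) ω) ∈ neverPositive} := by
  change MeasurableSet[generatedBy X (Set.Ici m)]
    {ω | ∀ k, 0 < k → ∑ i ∈ range k, X (m + i) ω ≤ 0}
  simp only [Set.ofPred_forall]
  exact .iInter fun k => .iInter fun _ =>
    measurableSet_le (measurable_sum_generatedBy fun i _ => Nat.le_add_right m i) measurable_const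

variable [MeasurableSpace Ω] {P : Measure Ω}

lemma generatedBy_le (hmeas : ∀ n, Measurable (X n)) (s : Set ℕ) :
    generatedBy X s ≤ ‹MeasurableSpace Ω› :=
  iSup₂_le fun i _ => (hmeas i).comap_le

lemma indep_generatedBy (hmeas : ∀ n, Measurable (X n)) (hindep : iIndepFun X P)
    {s t : Set ℕ} (hst : Disjoint s t) : Indep (generatedBy X s) (generatedBy X t) P :=
  indep_iSup_of_disjoint (fun i => (hmeas i).comap_le) hindep.iIndep hst

lemma identDistrib_reindex (hindep : iIndepFun X P)
    (hident : ∀ n, IdentDistrib (X n) (X 0) P P) {g : ℕ → ℕ} (hg : g.Injective) :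
    IdentDistrib (fun ω i => X (g i) ω) (fun ω i => X i ω) P P :=
  IdentDistrib.pi (fun i => (hident (g i)).trans (hident i).symm) (hindep.precomp hg) hindep

lemma measure_strictLadderAt_eq (hindep : iIndepFun X P)
    (hident : ∀ n, IdentDistrib (X n) (X 0) P P) (n : ℕ) :
    P {ω | (X · ω) ∈ strictLadderAt n} = P {ω | (X · ω) ∈ positiveUpTo n} := by
  have := (identDistrib_reindex hindep hident (revPrefix_injective n)).measure_mem_eq
    (measurableSet_positiveUpTo n)
  refine Eq.trans ?_ this
  congr 1 with ω
  exact comp_revPrefix_mem_positiveUpTo_iff.symm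

lemma measure_shift_neverPositive (hindep : iIndepFun X P)
    (hident : ∀ n, IdentDistrib (X n) (X 0) P P) (m : ℕ) :
    P {ω | (fun i => X (m + i) ω) ∈ neverPositive} = P {ω | (X · ω) ∈ neverPositive} :=
  (identDistrib_reindex hindep hident (add_right_injective m)).measure_mem_eq
    measurableSet_neverPositive

lemma tsum_measure_positiveUpTo_ne_top [IsProbabilityMeasure P]
    (hmeas : ∀ n, Measurable (X n)) (hindep : iIndepFun X P)
    (hident : ∀ n, IdentDistrib (X n) (X 0) P P)
    (hG : P {ω | (X · ω) ∈ neverPositive} ≠ 0) :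
    ∑' n, P {ω | (X · ω) ∈ positiveUpTo n} ≠ ∞ := by
  set A : ℕ → Set Ω := fun n => {ω | (X · ω) ∈ strictLadderAt n}
  set G : ℕ → Set Ω := fun n => {ω | (fun i => X (n + i) ω) ∈ neverPositive}
  have hAG : ∀ n, P (A n ∩ G n) = P (A n) * P {ω | (X · ω) ∈ neverPositive} := fun n => by
    rw [← measure_shift_neverPositive hindep hident n]
    exact (Indep_iff _ _ _).1 (indep_generatedBy hmeas hindep (Set.Iio_disjoint_Ici le_rfl))
      _ _ (measurableSet_strictLadderAt_generatedBy n)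
      (measurableSet_shift_neverPositive_generatedBy n)
  have hdisj : Pairwise (Disjoint on fun n => A n ∩ G n) :=
    (pairwise_disjoint_on _).2 fun a b hab => Set.disjoint_left.2 fun ω ha hb =>
      hab.not_ge (le_of_mem_strictLadderAt_of_shift_mem_neverPositive hb.1 ha.2)
  have hle : (∑' n, P (A n)) * P {ω | (X · ω) ∈ neverPositive} ≤ 1 :=
    calc (∑' n, P (A n)) * P {ω | (X · ω) ∈ neverPositive} = ∑' n, P (A n ∩ G n) := by
          rw [← ENNReal.tsum_mul_right]; simp_rw [hAG]
      _ = P (⋃ n, A n ∩ G n) := (measure_iUnion hdisj fun n =>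
          (generatedBy_le hmeas _ _ (measurableSet_strictLadderAt_generatedBy n)).inter
            (generatedBy_le hmeas _ _ (measurableSet_shift_neverPositive_generatedBy n))).symm
      _ ≤ 1 := prob_le_one
  simp_rw [← measure_strictLadderAt_eq hindep hident]
  intro htop
  rw [htop, ENNReal.top_mul hG] at hle
  exact ENNReal.top_ne_one (le_antisymm hle le_top)

lemma indep_generatedBy_Iio_comap (hmeas : ∀ n, Measurable (X n)) (hindep : iIndepFun X P)
    (n : ℕ) : Indep (generatedBy X (Set.Iio n)) (MeasurableSpace.comap (X n) inferInstance) P :=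
  indep_of_indep_of_le_right (indep_generatedBy hmeas hindep (s := Set.Iio n) (t := {n})
    (Set.disjoint_singleton_right.2 (lt_irrefl n)))
    (le_biSup (fun j => MeasurableSpace.comap (X j) inferInstance) (Set.mem_singleton n))

lemma integral_indicator_eq_zero (hmeas : ∀ n, Measurable (X n)) (hindep : iIndepFun X P)
    (hident : ∀ n, IdentDistrib (X n) (X 0) P P) (hmean : ∫ ω, X 0 ω ∂P = 0) {n : ℕ}
    {D : Set Ω} (hD : MeasurableSet[generatedBy X (Set.Iio n)] D) :
    ∫ ω, D.indicator (X n) ω ∂P = 0 := by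
  rw [integral_indicator (generatedBy_le hmeas _ _ hD),
    (indep_generatedBy_Iio_comap hmeas hindep n).setIntegral_eq_mul (f := fun x => x)
      (generatedBy_le hmeas _) (hmeas n).aemeasurable hD aestronglyMeasurable_id]
  simp [(hident n).integral_eq, hmean]

lemma lintegral_enorm_indicator_eq (hmeas : ∀ n, Measurable (X n)) (hindep : iIndepFun X P)
    (hident : ∀ n, IdentDistrib (X n) (X 0) P P) {n : ℕ} {D : Set Ω}
    (hD : MeasurableSet[generatedBy X (Set.Iio n)] D) :
    ∫⁻ ω, ‖D.indicator (X n) ω‖ₑ ∂P = P D * ∫⁻ ω, ‖X 0 ω‖ₑ ∂P := by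
  have hsplit : ∀ ω, ‖D.indicator (X n) ω‖ₑ = D.indicator 1 ω * ‖X n ω‖ₑ := fun ω => by
    by_cases hω : ω ∈ D <;> simp [hω]
  simp_rw [hsplit]
  rw [lintegral_mul_eq_lintegral_mul_lintegral_of_independent_measurableSpace
    (f := D.indicator 1) (g := fun ω => ‖X n ω‖ₑ) (generatedBy_le hmeas _) (hmeas n).comap_le
    (indep_generatedBy_Iio_comap hmeas hindep n) (measurable_const.indicator hD)
    (measurable_enorm.comp (comap_measurable (X n))),
    lintegral_indicator_one (generatedBy_le hmeas _ _ hD)]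
  exact congrArg (P D * ·) ((hident n).comp measurable_enorm).lintegral_eq

lemma tsum_lintegral_enorm_indicator_ne_top (hmeas : ∀ n, Measurable (X n))
    (hindep : iIndepFun X P) (hident : ∀ n, IdentDistrib (X n) (X 0) P P)
    (hint : Integrable (X 0) P) {D : ℕ → Set Ω}
    (hD : ∀ n, MeasurableSet[generatedBy X (Set.Iio n)] (D n)) (hsum : ∑' n, P (D n) ≠ ∞) :
    ∑' n, ∫⁻ ω, ‖(D n).indicator (X n) ω‖ₑ ∂P ≠ ∞ := by
  simp_rw [lintegral_enorm_indicator_eq hmeas hindep hident (hD _), ENNReal.tsum_mul_right]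
  exact ENNReal.mul_ne_top hsum hint.hasFiniteIntegral.ne

theorem integrable_tsum_indicator (hmeas : ∀ n, Measurable (X n))
    (hindep : iIndepFun X P) (hident : ∀ n, IdentDistrib (X n) (X 0) P P)
    (hint : Integrable (X 0) P) {D : ℕ → Set Ω}
    (hD : ∀ n, MeasurableSet[generatedBy X (Set.Iio n)] (D n)) (hsum : ∑' n, P (D n) ≠ ∞) :
    Integrable (fun ω => ∑' n, (D n).indicator (X n) ω) P :=
  integrable_tsum_of_tsum_lintegral_enorm_ne_top
    (fun n => (hmeas n).indicator (generatedBy_le hmeas _ _ (hD n)))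
    (tsum_lintegral_enorm_indicator_ne_top hmeas hindep hident hint hD hsum)

theorem integral_tsum_indicator_eq_zero (hmeas : ∀ n, Measurable (X n))
    (hindep : iIndepFun X P) (hident : ∀ n, IdentDistrib (X n) (X 0) P P)
    (hint : Integrable (X 0) P) (hmean : ∫ ω, X 0 ω ∂P = 0) {D : ℕ → Set Ω}
    (hD : ∀ n, MeasurableSet[generatedBy X (Set.Iio n)] (D n)) (hsum : ∑' n, P (D n) ≠ ∞) :
    ∫ ω, ∑' n, (D n).indicator (X n) ω ∂P = 0 := by
  rw [integral_tsum
    (fun n => ((hmeas n).indicator (generatedBy_le hmeas _ _ (hD n))).aestronglyMeasurable)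
    (tsum_lintegral_enorm_indicator_ne_top hmeas hindep hident hint hD hsum)]
  simp [integral_indicator_eq_zero hmeas hindep hident hmean (hD _)]

theorem measure_neverPositive_eq_zero [IsProbabilityMeasure P]
    (hmeas : ∀ n, Measurable (X n)) (hindep : iIndepFun X P)
    (hident : ∀ n, IdentDistrib (X n) (X 0) P P)
    (hint : Integrable (X 0) P) (hmean : ∫ ω, X 0 ω ∂P = 0) (hneg : P {ω | X 0 ω < 0} ≠ 0) :
    P {ω | (X · ω) ∈ neverPositive} = 0 := by
  by_contra hG
  have hD : ∀ n, MeasurableSet[generatedBy X (Set.Iio n)] {ω | (X · ω) ∈ positiveUpTo n} :=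
    measurableSet_positiveUpTo_generatedBy
  have hsum := tsum_measure_positiveUpTo_ne_top hmeas hindep hident hG
  have hZ_nonpos : ∀ᵐ ω ∂P, sumUntilNonpos (X · ω) ≤ 0 := by
    filter_upwards [ae_eventually_notMem hsum] with ω hω
    exact hω.exists.elim fun _ => sumUntilNonpos_nonpos
  have hZ_int : Integrable (fun ω => sumUntilNonpos (X · ω)) P :=
    integrable_tsum_indicator hmeas hindep hident hint hD hsum
  have hZ_mean : ∫ ω, sumUntilNonpos (X · ω) ∂P = 0 :=
    integral_tsum_indicator_eq_zero hmeas hindep hident hint hmean hD hsum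
  have hZ_zero : ∀ᵐ ω ∂P, -sumUntilNonpos (X · ω) = 0 :=
    (integral_eq_zero_iff_of_nonneg_ae (hZ_nonpos.mono fun _ h => neg_nonneg.2 h) hZ_int.neg).1
      (by rw [integral_neg, hZ_mean, neg_zero])
  refine hneg (measure_mono_null (fun ω hω => ?_) (ae_iff.1 hZ_zero))
  exact neg_ne_zero.2 ((sumUntilNonpos_of_neg hω).trans_lt hω).ne

theorem ae_infinite_setOf_sum_pos [IsProbabilityMeasure P]
    (hmeas : ∀ n, Measurable (X n)) (hindep : iIndepFun X P)
    (hident : ∀ n, IdentDistrib (X n) (X 0) P P)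
    (hint : Integrable (X 0) P) (hmean : ∫ ω, X 0 ω ∂P = 0) (hneg : P {ω | X 0 ω < 0} ≠ 0) :
    ∀ᵐ ω ∂P, {n | 0 < ∑ i ∈ range n, X i ω}.Infinite := by
  have hshift : ∀ m, ∀ᵐ ω ∂P, (fun i => X (m + i) ω) ∉ neverPositive := fun m => by
    simpa only [ae_iff, not_not, measure_shift_neverPositive hindep hident m] using
      measure_neverPositive_eq_zero hmeas hindep hident hint hmean hneg
  filter_upwards [ae_all_iff.2 hshift] with ω hω using infinite_setOf_sum_pos hω

lemma measure_lt_zero_ne_zero {Y : Ω → ℝ} (hint : Integrable Y P) (hmean : ∫ ω, Y ω ∂P = 0)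
    (hY : ¬ Y =ᵐ[P] 0) : P {ω | Y ω < 0} ≠ 0 := by
  intro h
  have hnonneg : 0 ≤ᵐ[P] Y := by
    filter_upwards [measure_eq_zero_iff_ae_notMem.1 h] with ω hω using not_lt.1 hω
  exact hY ((integral_eq_zero_iff_of_nonneg_ae hnonneg hint).1 hmean)

end IID

end RandomWalk

open RandomWalk in
/-- If `X 0, X 1, …` are i.i.d. non-degenerate integrable real random variables with mean 0
and `S n = X 0 + ⋯ + X (n-1)`, then almost surely `S n > 0` infinitely often and
`S n < 0` infinitely often. -/
theorem stmt_3 {Ω : Type*} [MeasurableSpace Ω] (P : Measure Ω) [IsProbabilityMeasure P]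
    (X : ℕ → Ω → ℝ) (hmeas : ∀ n, Measurable (X n))
    (hindep : iIndepFun X P)
    (hident : ∀ n, IdentDistrib (X n) (X 0) P P)
    (hint : Integrable (X 0) P) (hmean : ∫ θ, X 0 θ ∂P = 0)
    (hnondeg : ∀ c : ℝ, P.map (X 0) ≠ Measure.dirac c) :
    ∀ᵐ θ ∂P,
      {n : ℕ | 0 < ∑ i ∈ Finset.range n, X i θ}.Infinite ∧
      {n : ℕ | ∑ i ∈ Finset.range n, X i θ < 0}.Infinite := by
  have hX : ¬ X 0 =ᵐ[P] 0 := fun h => hnondeg 0 <| by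
    rw [Measure.map_congr h, Pi.zero_def, Measure.map_const, measure_univ, one_smul]
  have hmean' : ∫ θ, -X 0 θ ∂P = 0 := by rw [integral_neg, hmean, neg_zero]
  have hpos := ae_infinite_setOf_sum_pos hmeas hindep hident hint hmean
    (measure_lt_zero_ne_zero hint hmean hX)
  have hneg := ae_infinite_setOf_sum_pos (X := fun n θ => -X n θ) (fun n => (hmeas n).neg)
    (hindep.comp (fun _ x => -x) fun _ => measurable_neg)
    (fun n => (hident n).comp measurable_neg) hint.neg hmean'
    (measure_lt_zero_ne_zero hint.neg hmean' fun h => hX (h.mono fun _ => neg_eq_zero.1))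
  filter_upwards [hpos, hneg] with θ hθpos hθneg
  refine ⟨hθpos, ?_⟩
  simpa only [sum_neg_distrib, neg_pos] using hθneg
end
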